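/- Every collection of more than h!·(t-1)^h many h-element subsets of a set contains a t-sunflower, i.e., t sets whose pairwise intersections are all equal to a common set R. -/

import Mathlib

/-!
Induction on `h`. Take a maximal pairwise disjoint subfamily `𝒟 ⊆ 𝒜`. If it has `t` members,
they form a sunflower with empty kernel. Otherwise its union `D` has at most `(t - 1) * h`
elements and, by maximality, meets every member of `𝒜`; so some `a ∈ D` lies in more than
`|𝒜| / |D| > (h - 1)! * (t - 1) ^ (h - 1)` members. The sets `X \ {a}` for these members
contain a `t`-sunflower by induction, and adding `a` back gives one in `𝒜`.
-/

open Finset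
open scoped Nat

section

variable {α : Type*}

lemma exists_maximal_pairwiseDisjoint_subset (𝒜 : Finset (Finset α)) :
    ∃ 𝒟 ⊆ 𝒜, (𝒟 : Set (Finset α)).PairwiseDisjoint id ∧
      ∀ X ∈ 𝒜, X.Nonempty → ∃ Y ∈ 𝒟, ¬Disjoint X Y := by
  classical
  let 𝒬 := 𝒜.powerset.filter
    fun 𝒟 : Finset (Finset α) => (𝒟 : Set (Finset α)).PairwiseDisjoint id
  obtain ⟨𝒟, h𝒟mem, hmax⟩ := exists_maximal (s := 𝒬) ⟨∅, by simp [𝒬]⟩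
  obtain ⟨h𝒟𝒜, h𝒟⟩ := mem_filter.mp h𝒟mem
  rw [mem_powerset] at h𝒟𝒜
  refine ⟨𝒟, h𝒟𝒜, h𝒟, fun X hX hXne => ?_⟩
  by_contra! hdisj
  have hX𝒟 : X ∈ 𝒟 := by
    have hins : insert X 𝒟 ∈ 𝒬 := by
      rw [mem_filter, mem_powerset, coe_insert]
      exact ⟨insert_subset hX h𝒟𝒜, h𝒟.insert fun Y hY _ => hdisj Y hY⟩
    exact hmax hins (subset_insert X 𝒟) (mem_insert_self X 𝒟)
  exact hXne.ne_empty (disjoint_self.mp (hdisj X hX𝒟))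

variable [DecidableEq α]

def IsSunflower (𝒮 : Finset (Finset α)) : Prop :=
  ∃ R : Finset α, ∀ X ∈ 𝒮, ∀ Y ∈ 𝒮, X ≠ Y → X ∩ Y = R

lemma isSunflower_of_pairwiseDisjoint {𝒮 : Finset (Finset α)}
    (h𝒮 : (𝒮 : Set (Finset α)).PairwiseDisjoint id) : IsSunflower 𝒮 :=
  ⟨∅, fun _ hX _ hY hXY => disjoint_iff_inter_eq_empty.mp (h𝒮 hX hY hXY)⟩

lemma IsSunflower.image_insert {𝒮 : Finset (Finset α)} (h𝒮 : IsSunflower 𝒮) (a : α) :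
    IsSunflower (𝒮.image (insert a)) := by
  obtain ⟨R, hR⟩ := h𝒮
  refine ⟨insert a R, ?_⟩
  simp only [mem_image]
  rintro _ ⟨X, hX, rfl⟩ _ ⟨Y, hY, rfl⟩ hXY
  rw [← insert_inter_distrib, hR X hX Y hY (by rintro rfl; exact hXY rfl)]

lemma exists_lt_card_filter_mem_of_mul_lt_card {𝒜 : Finset (Finset α)} {D : Finset α} {m : ℕ}
    (hmeet : ∀ X ∈ 𝒜, ¬Disjoint D X) (hcard : #D * m < #𝒜) :
    ∃ a ∈ D, m < #{X ∈ 𝒜 | a ∈ X} := by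
  by_contra! hsmall
  have hcover : 𝒜 ⊆ D.biUnion fun a => {X ∈ 𝒜 | a ∈ X} := by
    intro X hX
    obtain ⟨a, haD, haX⟩ := not_disjoint_iff.mp (hmeet X hX)
    exact mem_biUnion.mpr ⟨a, haD, mem_filter.mpr ⟨hX, haX⟩⟩
  have := (card_le_card hcover).trans (card_biUnion_le_card_mul D _ m hsmall)
  omega

lemma card_memberSubfamily (𝒜 : Finset (Finset α)) (a : α) :
    #(𝒜.memberSubfamily a) = #{X ∈ 𝒜 | a ∈ X} :=
  card_image_of_injOn ((erase_injOn' a).mono fun _ hX => (mem_filter.mp hX).2)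

lemma card_eq_of_mem_memberSubfamily {𝒜 : Finset (Finset α)} {a : α} {X : Finset α} {h : ℕ}
    (hcard : ∀ Y ∈ 𝒜, #Y = h + 1) (hX : X ∈ 𝒜.memberSubfamily a) : #X = h := by
  obtain ⟨hX𝒜, haX⟩ := mem_memberSubfamily.mp hX
  simpa [card_insert_of_notMem haX] using hcard _ hX𝒜

lemma exists_isSunflower_of_memberSubfamily {𝒜 𝒮 : Finset (Finset α)} {a : α}
    (h𝒮 : 𝒮 ⊆ 𝒜.memberSubfamily a) (hsun : IsSunflower 𝒮) :
    ∃ 𝒮' ⊆ 𝒜, #𝒮' = #𝒮 ∧ IsSunflower 𝒮' := by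
  have hmem : ∀ X ∈ 𝒮, insert a X ∈ 𝒜 ∧ a ∉ X :=
    fun X hX => mem_memberSubfamily.mp (h𝒮 hX)
  refine ⟨𝒮.image (insert a), ?_, ?_, hsun.image_insert a⟩
  · simpa only [image_subset_iff] using fun X hX => (hmem X hX).1
  · exact card_image_of_injOn fun X hX Y hY =>
      insert_erase_invOn.2.injOn (hmem X hX).2 (hmem Y hY).2

theorem exists_isSunflower_of_factorial_mul_pow_lt_card (h t : ℕ) (𝒜 : Finset (Finset α))
    (hcard : ∀ X ∈ 𝒜, #X = h) (hbig : h ! * (t - 1) ^ h < #𝒜) :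
    ∃ 𝒮 ⊆ 𝒜, #𝒮 = t ∧ IsSunflower 𝒮 := by
  induction h generalizing 𝒜 with
  | zero =>
    have : 𝒜 ⊆ {∅} := fun X hX => mem_singleton.mpr (card_eq_zero.mp (hcard X hX))
    have := (card_le_card this).trans_eq (card_singleton ∅)
    simp only [Nat.factorial_zero, pow_zero, mul_one] at hbig
    omega
  | succ h ih =>
    obtain ⟨𝒟, h𝒟𝒜, h𝒟disj, h𝒟meet⟩ := exists_maximal_pairwiseDisjoint_subset 𝒜
    by_cases ht : t ≤ #𝒟
    · obtain ⟨𝒮, h𝒮𝒟, h𝒮card⟩ := exists_subset_card_eq ht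
      exact ⟨𝒮, h𝒮𝒟.trans h𝒟𝒜, h𝒮card,
        isSunflower_of_pairwiseDisjoint (h𝒟disj.subset h𝒮𝒟)⟩
    set D := 𝒟.biUnion id
    have hD : #D ≤ (t - 1) * (h + 1) :=
      (card_biUnion_le_card_mul 𝒟 id _ fun Y hY => (hcard Y (h𝒟𝒜 hY)).le).trans
        (Nat.mul_le_mul_right _ (by omega))
    have hmeet : ∀ X ∈ 𝒜, ¬Disjoint D X := by
      intro X hX
      obtain ⟨Y, hY, hXY⟩ := h𝒟meet X hX (card_pos.mp (by rw [hcard X hX]; omega))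
      exact fun hDX => hXY (hDX.symm.mono_right (subset_biUnion_of_mem id hY))
    have hcount : #D * (h ! * (t - 1) ^ h) < #𝒜 :=
      calc #D * (h ! * (t - 1) ^ h) ≤ (t - 1) * (h + 1) * (h ! * (t - 1) ^ h) :=
            Nat.mul_le_mul_right _ hD
        _ = (h + 1)! * (t - 1) ^ (h + 1) := by rw [Nat.factorial_succ]; ring
        _ < #𝒜 := hbig
    obtain ⟨a, -, ha⟩ := exists_lt_card_filter_mem_of_mul_lt_card hmeet hcount
    obtain ⟨𝒮, h𝒮, h𝒮card, hsun⟩ := ih _ (fun X => card_eq_of_mem_memberSubfamily hcard)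
      (by rwa [card_memberSubfamily])
    rw [← h𝒮card]
    exact exists_isSunflower_of_memberSubfamily h𝒮 hsun

end

theorem stmt1 {α : Type*} [DecidableEq α] (h t : ℕ) (𝒜 : Finset (Finset α))
    (hcard : ∀ X ∈ 𝒜, X.card = h)
    (hbig : Nat.factorial h * (t - 1) ^ h < 𝒜.card) :
    ∃ 𝒮 ⊆ 𝒜, 𝒮.card = t ∧ ∃ R : Finset α, ∀ X ∈ 𝒮, ∀ Y ∈ 𝒮, X ≠ Y → X ∩ Y = R :=
  exists_isSunflower_of_factorial_mul_pow_lt_card h t 𝒜 hcard hbig
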